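/- arXiv:2001.06411 — 3 statements merged into one kernel-verified Lean document; each statement's English description precedes it below -/
import Mathlib

section
/- Let x, z be vertices of DL_d(q) with h_i(z) = 0 for all i. If for every i, m_i(z) < m_i(x) whenever m_i(x) ≠ 0 and m_i(z) = 0 whenever m_i(x) = 0, then d(x,z) = d(x, id), where id is the basepoint. -/
open Finset

/-- A vertex of the oriented (q+1)-valent tree `T` underlying Diestel–Leader graphs:
descend `m` edges from the basepoint `o` along its ancestor ray (whose edges all
carry the label `0`), then ascend along the edge labels listed in `w`.
The normalization condition (if `m ≠ 0`, the first label of `w` is not `0`)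
makes this representation unique. -/
structure TreeVertex (q : ℕ) where
  m : ℕ
  w : List (Fin q)
  norm : ∀ a t, m ≠ 0 → w = a :: t → (a : ℕ) ≠ 0

namespace TreeVertex

variable {q : ℕ}

/-- the basepoint `o` of the tree -/
def o (q : ℕ) : TreeVertex q := ⟨0, [], fun _ _ h _ => absurd rfl h⟩

/-- `l v = d(v, o ⋏ v)` -/
def l (v : TreeVertex q) : ℕ := v.w.length

/-- the height function `h = l - m` -/
def h (v : TreeVertex q) : ℤ := (v.l : ℤ) - (v.m : ℤ)

/-- length of the longest common prefix of two lists -/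
def cpl : List (Fin q) → List (Fin q) → ℕ
  | a :: s, b :: t => if a = b then cpl s t + 1 else 0
  | _, _ => 0

/-- `mPair x y = d(x, x ⋏ y)`, the distance from `x` to the greatest common
ancestor of `x` and `y`. -/
def mPair (x y : TreeVertex q) : ℕ :=
  if x.m < y.m then x.l + (y.m - x.m)
  else if y.m < x.m then x.l
  else x.l - cpl x.w y.w

/-- the graph distance in the tree -/
def dist (x y : TreeVertex q) : ℕ := mPair x y + mPair y x

end TreeVertex

/-- The Diestel–Leader graph `DL_d(q)`: `d`-tuples of tree vertices whose heights
sum to `0`. -/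
structure DL (d q : ℕ) where
  t : Fin d → TreeVertex q
  hsum : ∑ i, (t i).h = 0

namespace DL

variable {d q : ℕ}

/-- the basepoint `id` of `DL_d(q)` -/
def id0 (d q : ℕ) : DL d q :=
  ⟨fun _ => TreeVertex.o q, by simp [TreeVertex.h, TreeVertex.o, TreeVertex.l]⟩

/-- the pairwise coordinate `m_i(x,y) = d_i(p_i x, p_i x ⋏ p_i y)` -/
def mm (x y : DL d q) (i : Fin d) : ℕ := TreeVertex.mPair (x.t i) (y.t i)

/-- the pairwise coordinate `l_i(x,y) = d_i(p_i y, p_i x ⋏ p_i y)` -/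
def ll (x y : DL d q) (i : Fin d) : ℕ := TreeVertex.mPair (y.t i) (x.t i)

/-- the coordinate `m_i(x)` -/
def mc (x : DL d q) (i : Fin d) : ℕ := (x.t i).m

/-- the coordinate `l_i(x)` -/
def lc (x : DL d q) (i : Fin d) : ℕ := (x.t i).l

/-- the height coordinate `h_i(x) = l_i(x) - m_i(x)` -/
def hc (x : DL d q) (i : Fin d) : ℤ := (x.t i).h

/-- The Stein–Taback quantity `f_{σ,i}` (here `i` is 1-based, `2 ≤ i ≤ d`):
`f_{σ,i} = m_{σ(1)} + ⋯ + m_{σ(i)} + l_{σ(i)} + ⋯ + l_{σ(d)}` for `2 ≤ i ≤ d-1`,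
and `f_{σ,d} = 2m_{σ(1)} + m_{σ(2)} + ⋯ + m_{σ(d)} + l_{σ(d)}`. -/
def fST {d : ℕ} (m l : Fin d → ℕ) (σ : Equiv.Perm (Fin d)) (i : ℕ) : ℕ :=
  if i = d then
    (∑ j, m (σ j)) + (∑ j ∈ univ.filter fun j : Fin d => (j : ℕ) = 0, m (σ j))
      + (∑ j ∈ univ.filter fun j : Fin d => (j : ℕ) = d - 1, l (σ j))
  else
    (∑ j ∈ univ.filter fun j : Fin d => (j : ℕ) + 1 ≤ i, m (σ j))
      + (∑ j ∈ univ.filter fun j : Fin d => i ≤ (j : ℕ) + 1, l (σ j))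

/-- The distance on `DL_d(q)`, via the Stein–Taback formula
`d(x,y) = min_{σ ∈ Σ_d} max_{2 ≤ i ≤ d} f_{σ,i}(x,y)`. -/
noncomputable def dist (x y : DL d q) : ℕ :=
  ⨅ σ : Equiv.Perm (Fin d), ⨆ i ∈ Finset.Icc 2 d, fST (mm x y) (ll x y) σ i

end DL

/-- Let `x, z` be vertices of `DL_d(q)` with `h_i(z) = 0` for all
`i`.  If for every `i`, `m_i(z) < m_i(x)` whenever `m_i(x) ≠ 0`, and `m_i(z) = 0`
whenever `m_i(x) = 0`, then `d(x,z) = d(x, id)`, where `id` is the basepoint. -/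
theorem dist_eq_dist_id {d q : ℕ} (hd : 2 ≤ d) (x z : DL d q)
    (hz : ∀ i, DL.hc z i = 0)
    (hlt : ∀ i, DL.mc x i ≠ 0 → DL.mc z i < DL.mc x i)
    (hzero : ∀ i, DL.mc x i = 0 → DL.mc z i = 0) :
    DL.dist x z = DL.dist x (DL.id0 d q) := by
  have cpl_nil : ∀ s : List (Fin q), TreeVertex.cpl s [] = 0 := by
    intro s; cases s <;> rfl
  have cpl_nil' : ∀ s : List (Fin q), TreeVertex.cpl [] s = 0 := by
    intro s; cases s <;> rfl
  have key : ∀ i,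
      (TreeVertex.mPair (x.t i) (z.t i) = TreeVertex.mPair (x.t i) (TreeVertex.o q)) ∧
      (TreeVertex.mPair (z.t i) (x.t i) = TreeVertex.mPair (TreeVertex.o q) (x.t i)) := by
    intro i
    have hzl : (z.t i).l = (z.t i).m := by
      have := hz i
      simp only [DL.hc, TreeVertex.h, sub_eq_zero] at this
      exact_mod_cast this
    by_cases hx0 : (x.t i).m = 0
    · have hz0 : (z.t i).m = 0 := hzero i hx0
      have hzw : (z.t i).w = [] := by
        have : (z.t i).w.length = 0 := by
          have := hzl; simp only [TreeVertex.l] at this; omega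
        exact List.length_eq_zero_iff.mp this
      constructor
      · simp [TreeVertex.mPair, TreeVertex.o, hx0, hz0, hzw, cpl_nil]
      · simp [TreeVertex.mPair, TreeVertex.o, TreeVertex.l, hx0, hz0, hzw,
          cpl_nil', cpl_nil]
    · have hlt' : (z.t i).m < (x.t i).m := hlt i hx0
      constructor
      · simp only [TreeVertex.mPair, TreeVertex.o]
        rw [if_neg (by omega), if_pos hlt']
        show (x.t i).l = if (x.t i).m < 0 then (x.t i).l + (0 - (x.t i).m) else if 0 < (x.t i).m then (x.t i).l else (x.t i).l - TreeVertex.cpl (x.t i).w []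
        rw [if_neg (by omega), if_pos (by omega)]
      · simp only [TreeVertex.mPair, TreeVertex.o, TreeVertex.l]
        rw [if_pos hlt']
        show (z.t i).w.length + ((x.t i).m - (z.t i).m) = if 0 < (x.t i).m then ([] : List (Fin q)).length + ((x.t i).m - 0) else if (x.t i).m < 0 then ([] : List (Fin q)).length else ([] : List (Fin q)).length - TreeVertex.cpl [] (x.t i).w
        rw [if_pos (by omega)]
        simp only [List.length_nil, TreeVertex.l]
        have : (z.t i).w.length = (z.t i).m := hzl
        omega
  have hmm : DL.mm x z = DL.mm x (DL.id0 d q) := by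
    funext i; exact (key i).1
  have hll : DL.ll x z = DL.ll x (DL.id0 d q) := by
    funext i; exact (key i).2
  simp only [DL.dist, hmm, hll]
end

section
/- Let x, z be vertices of DL_d(q) with h_i(z) = 0 for all i. If m_i(z) ≤ m_i(x) for every i, then d(x,z) ≤ d(x,id). -/
open Finset

/-!
Both distances are computed by the Stein–Taback formula, which is monotone in the pair
coordinates `m_i(·,·)` and `l_i(·,·)`. So it suffices to compare them tree by tree:
`m_i(x,z) ≤ l_i(x) = m_i(x,id)` because `z` does not lie deeper than `x`, and
`l_i(x,z) ≤ m_i(x) = l_i(x,id)` because `z` has height `0` and `x ⋏ z` lies no lower than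
`x ⋏ o`, which has height `-m_i(x)`.
-/

theorem Finset.ciSup₂_mono {ι α : Type*} [ConditionallyCompleteLinearOrderBot α]
    {s : Finset ι} {f g : ι → α} (h : ∀ i ∈ s, f i ≤ g i) :
    ⨆ i ∈ s, f i ≤ ⨆ i ∈ s, g i := by
  have hbdd : BddAbove (⋃ i, Set.range fun _ : i ∈ s => g i) := by
    refine ⟨s.sup g, ?_⟩
    rintro _ ⟨_, ⟨i, rfl⟩, ⟨hi, rfl⟩⟩
    exact le_sup hi
  exact ciSup_le' fun i => ciSup_le' fun hi =>
    (h i hi).trans (le_ciSup₂ (f := fun i (_ : i ∈ s) => g i) hbdd i hi)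

namespace TreeVertex

variable {q : ℕ}

@[simp]
theorem cpl_nil_left (w : List (Fin q)) : cpl [] w = 0 := by
  cases w <;> rfl

@[simp]
theorem cpl_nil_right (w : List (Fin q)) : cpl w [] = 0 := by
  cases w <;> rfl

@[simp]
theorem mPair_o_right (v : TreeVertex q) : mPair v (o q) = v.l := by
  simp [mPair, o]

@[simp]
theorem mPair_o_left (v : TreeVertex q) : mPair (o q) v = v.m := by
  unfold mPair o l
  split <;> simp_all

theorem mPair_le_l_of_m_le {x y : TreeVertex q} (h : y.m ≤ x.m) : mPair x y ≤ x.l := by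
  unfold mPair
  split_ifs <;> omega

theorem mPair_le_m_of_l_le_m {x y : TreeVertex q} (hy : y.l ≤ y.m) (h : y.m ≤ x.m) :
    mPair y x ≤ x.m := by
  unfold mPair
  split_ifs <;> omega

end TreeVertex

namespace DL

variable {d q : ℕ}

theorem fST_mono {m m' l l' : Fin d → ℕ} (hm : ∀ j, m j ≤ m' j) (hl : ∀ j, l j ≤ l' j)
    (σ : Equiv.Perm (Fin d)) (i : ℕ) : fST m l σ i ≤ fST m' l' σ i := by
  unfold fST
  split <;> gcongr <;> first | exact hm _ | exact hl _

theorem dist_le_dist_of_le {x y x' y' : DL d q} (hm : ∀ i, mm x y i ≤ mm x' y' i)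
    (hl : ∀ i, ll x y i ≤ ll x' y' i) : dist x y ≤ dist x' y' :=
  ciInf_mono (OrderBot.bddBelow _) fun σ =>
    Finset.ciSup₂_mono fun i _ => fST_mono hm hl σ i

@[simp]
theorem mm_id0 (x : DL d q) (i : Fin d) : mm x (id0 d q) i = lc x i :=
  TreeVertex.mPair_o_right _

@[simp]
theorem ll_id0 (x : DL d q) (i : Fin d) : ll x (id0 d q) i = mc x i :=
  TreeVertex.mPair_o_left _

end DL

theorem dist_le_dist_id_general {d q : ℕ} (x z : DL d q)
    (hz : ∀ i, DL.hc z i = 0)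
    (hm : ∀ i, DL.mc z i ≤ DL.mc x i) :
    DL.dist x z ≤ DL.dist x (DL.id0 d q) := by
  refine DL.dist_le_dist_of_le (fun i => ?_) (fun i => ?_)
  · rw [DL.mm_id0]
    exact TreeVertex.mPair_le_l_of_m_le (hm i)
  · have hzi : (z.t i).l = (z.t i).m := by
      have := hz i
      simp only [DL.hc, TreeVertex.h] at this
      omega
    rw [DL.ll_id0]
    exact TreeVertex.mPair_le_m_of_l_le_m hzi.le (hm i)

/-- Let `x, z` be vertices of `DL_d(q)` with `h_i(z) = 0` for all
`i`.  If `m_i(z) ≤ m_i(x)` for every `i`, then `d(x,z) ≤ d(x, id)`. -/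
theorem dist_le_dist_id {d q : ℕ} (hd : 2 ≤ d) (x z : DL d q)
    (hz : ∀ i, DL.hc z i = 0)
    (hm : ∀ i, DL.mc z i ≤ DL.mc x i) :
    DL.dist x z ≤ DL.dist x (DL.id0 d q) :=
  dist_le_dist_id_general x z hz hm
end

section
/- In DL_3(q), let (β_n) be the sequence with m_3(β_n) = l_3(β_n) = n (upward edges labeled 1) and trivial coordinates in trees 1 and 2. For any vertex z with coordinates m_i = m_i(z), l_i = l_i(z), h_i = l_i − m_i, and for n sufficiently large relative to these parameters, d(β_n, z) = 2n + m_1 + m_2 + min{m_1+h_3, m_2+h_3, l_1, h_2+h_3, h_1+h_3, l_2}. In particular d(β_n, id) = 2n and the horofunction β defined by (β_n) satisfies β(z) = m_1 + m_2 + min_{j=1,2}{m_j+h_3, h_j+h_3, l_j}. -/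
open Finset

namespace DL3

/-- the label `1` (requires `2 ≤ q`) -/
def one (q : ℕ) (hq : 2 ≤ q) : Fin q := ⟨1, by omega⟩

/-- the tree vertex at depth `k` obtained by descending `k` edges from `o` and
ascending `k` edges all labeled `1`; it satisfies `m = l = k`, `h = 0`. -/
def ray (q : ℕ) (hq : 2 ≤ q) (k : ℕ) : TreeVertex q :=
  ⟨k, List.replicate k (one q hq), by
    intro a t _ hw
    cases k with
    | zero => simp at hw
    | succ n =>
      rw [List.replicate_succ] at hw
      have : a = one q hq := (List.cons.injEq _ _ _ _).mp hw |>.1.symm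
      simp [this, one]⟩

/-- the point `ζ^i_k ∈ DL_3(q)`: `m_i = l_i = k` (upward edges labeled `1`),
all other coordinates trivial -/
def zeta (q : ℕ) (hq : 2 ≤ q) (i : Fin 3) (k : ℕ) : DL 3 q :=
  ⟨fun j => if j = i then ray q hq k else TreeVertex.o q, by
    have h0 : ∀ j : Fin 3, ((if j = i then ray q hq k else TreeVertex.o q) : TreeVertex q).h = 0 := by
      intro j
      split <;> simp [TreeVertex.h, TreeVertex.l, ray, TreeVertex.o]
    simp [h0]⟩

/-- the sequence `β_n`: `m_3(β_n) = l_3(β_n) = n` along edges labeled `1`,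
trivial in the first two trees -/
def beta (q : ℕ) (hq : 2 ≤ q) (n : ℕ) : DL 3 q := zeta q hq 2 n

/-- the sequence `α_n`: `l_1(α_n) = n` (upward edges labeled `1`),
`m_2(α_n) = n`, all other coordinates trivial -/
def alpha (q : ℕ) (hq : 2 ≤ q) (n : ℕ) : DL 3 q :=
  ⟨![⟨0, List.replicate n (one q hq), fun _ _ h _ => absurd rfl h⟩,
     ⟨n, [], by intro a t _ hw; simp at hw⟩,
     TreeVertex.o q], by
    simp [Fin.sum_univ_three, TreeVertex.h, TreeVertex.l, TreeVertex.o]⟩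

/-- the point `ν^{j,ε}_k` (`j ∈ {1,2}`): ascend `k` edges labeled `ε` in tree `j`,
descend `k` edges in tree `3`; so `l_j = k`, `m_3 = k`, all else trivial. -/
def nu (q : ℕ) (j : Fin 2) (ε : Fin q) (k : ℕ) : DL 3 q :=
  ⟨fun i =>
      if i = Fin.castLE (by omega) j then ⟨0, List.replicate k ε, fun _ _ h _ => absurd rfl h⟩
      else if i = 2 then ⟨k, [], by intro a t _ hw; simp at hw⟩
      else TreeVertex.o q, by
    fin_cases j <;>
      simp [Fin.sum_univ_three, TreeVertex.h, TreeVertex.l, TreeVertex.o]⟩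

/-- the horofunction `β` of `DL_3(q)`:
`β(z) = m_1 + m_2 + min_{j=1,2} {m_j + h_3, h_j + h_3, l_j}` -/
def betaFn {q : ℕ} (w : DL 3 q) : ℤ :=
  (DL.mc w 0 : ℤ) + DL.mc w 1 +
    min ((DL.mc w 0 : ℤ) + DL.hc w 2)
      (min (DL.hc w 0 + DL.hc w 2)
        (min (DL.lc w 0 : ℤ)
          (min ((DL.mc w 1 : ℤ) + DL.hc w 2)
            (min (DL.hc w 1 + DL.hc w 2) (DL.lc w 1 : ℤ)))))

end DL3

open Filter DL3

section Aux
variable {q : ℕ}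

lemma cpl_nil (w : List (Fin q)) : TreeVertex.cpl w ([] : List (Fin q)) = 0 := by
  cases w <;> rfl

lemma cpl_nil' (w : List (Fin q)) : TreeVertex.cpl ([] : List (Fin q)) w = 0 := rfl

lemma mPair_o_left (v : TreeVertex q) : (TreeVertex.o q).mPair v = v.m := by
  rcases Nat.eq_zero_or_pos v.m with h | h <;>
    simp [TreeVertex.mPair, TreeVertex.o, TreeVertex.l, h, cpl_nil']

lemma mPair_o_right (v : TreeVertex q) : v.mPair (TreeVertex.o q) = v.l := by
  rcases Nat.eq_zero_or_pos v.m with h | h <;>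
    simp [TreeVertex.mPair, TreeVertex.o, TreeVertex.l, h, cpl_nil]

lemma ray_m (hq : 2 ≤ q) (n : ℕ) : (ray q hq n).m = n := rfl

lemma ray_l (hq : 2 ≤ q) (n : ℕ) : (ray q hq n).l = n := by
  simp [ray, TreeVertex.l]

lemma mPair_ray_left (hq : 2 ≤ q) (n : ℕ) (v : TreeVertex q) (h : v.m < n) :
    (ray q hq n).mPair v = n := by
  simp [TreeVertex.mPair, ray_m, ray_l, h, Nat.not_lt.mpr h.le]

lemma mPair_ray_right (hq : 2 ≤ q) (n : ℕ) (v : TreeVertex q) (h : v.m < n) :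
    v.mPair (ray q hq n) = v.l + (n - v.m) := by
  simp [TreeVertex.mPair, ray_m, h]

lemma fST2 (M L : Fin 3 → ℕ) (σ : Equiv.Perm (Fin 3)) :
    DL.fST M L σ 2 = M (σ 0) + M (σ 1) + (L (σ 1) + L (σ 2)) := by
  simp [DL.fST, Finset.sum_filter, Fin.sum_univ_three]

lemma fST3 (M L : Fin 3 → ℕ) (σ : Equiv.Perm (Fin 3)) :
    DL.fST M L σ 3 = M (σ 0) + M (σ 1) + M (σ 2) + M (σ 0) + L (σ 2) := by
  simp [DL.fST, Finset.sum_filter, Fin.sum_univ_three]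

lemma sup23_le (f : ℕ → ℕ) (i : ℕ) :
    (⨆ _ : i ∈ Finset.Icc 2 3, f i) ≤ max (f 2) (f 3) := by
  by_cases hi : i ∈ Finset.Icc 2 3
  · rw [ciSup_pos hi]
    rcases Finset.mem_Icc.mp hi with ⟨h2, h3⟩
    interval_cases i
    · exact le_max_left _ _
    · exact le_max_right _ _
  · haveI : IsEmpty (i ∈ Finset.Icc 2 3) := ⟨hi⟩
    rw [ciSup_of_empty]
    exact Nat.zero_le _

lemma sup23 (f : ℕ → ℕ) : (⨆ i ∈ Finset.Icc 2 3, f i) = max (f 2) (f 3) := by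
  apply le_antisymm
  · exact ciSup_le fun i => sup23_le f i
  · have hbdd : BddAbove (Set.range fun i => ⨆ _ : i ∈ Finset.Icc 2 3, f i) := by
      refine ⟨max (f 2) (f 3), ?_⟩
      rintro x ⟨i, rfl⟩
      exact sup23_le f i
    have h2 : (2:ℕ) ∈ Finset.Icc 2 3 := by decide
    have h3 : (3:ℕ) ∈ Finset.Icc 2 3 := by decide
    refine max_le ?_ ?_
    · have := le_ciSup hbdd 2
      rwa [ciSup_pos h2] at this
    · have := le_ciSup hbdd 3
      rwa [ciSup_pos h3] at this

lemma perm_cases (σ : Equiv.Perm (Fin 3)) :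
    (σ 0 = 0 ∧ σ 1 = 1 ∧ σ 2 = 2) ∨ (σ 0 = 1 ∧ σ 1 = 0 ∧ σ 2 = 2) ∨
    (σ 0 = 0 ∧ σ 1 = 2 ∧ σ 2 = 1) ∨ (σ 0 = 1 ∧ σ 1 = 2 ∧ σ 2 = 0) ∨
    (σ 0 = 2 ∧ σ 1 = 0 ∧ σ 2 = 1) ∨ (σ 0 = 2 ∧ σ 1 = 1 ∧ σ 2 = 0) := by
  revert σ; decide

end Aux

section Dist3
set_option maxHeartbeats 1000000 in

lemma dist3 (M L : Fin 3 → ℕ) :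
    (⨅ σ : Equiv.Perm (Fin 3), ⨆ i ∈ Finset.Icc 2 3, DL.fST M L σ i) =
    min (min (min (min (min
      (max (M 0 + M 1 + (L 1 + L 2)) (M 0 + M 1 + M 2 + M 0 + L 2))
      (max (M 1 + M 0 + (L 0 + L 2)) (M 1 + M 0 + M 2 + M 1 + L 2)))
      (max (M 0 + M 2 + (L 2 + L 1)) (M 0 + M 2 + M 1 + M 0 + L 1)))
      (max (M 1 + M 2 + (L 2 + L 0)) (M 1 + M 2 + M 0 + M 1 + L 0)))
      (max (M 2 + M 0 + (L 0 + L 1)) (M 2 + M 0 + M 1 + M 2 + L 1)))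
      (max (M 2 + M 1 + (L 1 + L 0)) (M 2 + M 1 + M 0 + M 2 + L 0)) := by
  have key : ∀ σ : Equiv.Perm (Fin 3),
      (⨅ σ : Equiv.Perm (Fin 3), ⨆ i ∈ Finset.Icc 2 3, DL.fST M L σ i) ≤
      max (M (σ 0) + M (σ 1) + (L (σ 1) + L (σ 2)))
        (M (σ 0) + M (σ 1) + M (σ 2) + M (σ 0) + L (σ 2)) := by
    intro σ
    have h := ciInf_le (OrderBot.bddBelow _)
      (f := fun σ : Equiv.Perm (Fin 3) => ⨆ i ∈ Finset.Icc 2 3, DL.fST M L σ i) σ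
    rwa [sup23, fST2, fST3] at h
  apply le_antisymm
  · refine le_min (le_min (le_min (le_min (le_min ?_ ?_) ?_) ?_) ?_) ?_
    · have h := key (Equiv.refl _)
      simpa using h
    · have h := key (Equiv.swap 0 1)
      have e0 : (Equiv.swap (0:Fin 3) 1) 0 = 1 := by decide
      have e1 : (Equiv.swap (0:Fin 3) 1) 1 = 0 := by decide
      have e2 : (Equiv.swap (0:Fin 3) 1) 2 = 2 := by decide
      rwa [e0, e1, e2] at h
    · have h := key (Equiv.swap 1 2)
      have e0 : (Equiv.swap (1:Fin 3) 2) 0 = 0 := by decide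
      have e1 : (Equiv.swap (1:Fin 3) 2) 1 = 2 := by decide
      have e2 : (Equiv.swap (1:Fin 3) 2) 2 = 1 := by decide
      rwa [e0, e1, e2] at h
    · have h := key ((Equiv.swap 1 2).trans (Equiv.swap 0 1))
      have e0 : ((Equiv.swap (1:Fin 3) 2).trans (Equiv.swap 0 1)) 0 = 1 := by decide
      have e1 : ((Equiv.swap (1:Fin 3) 2).trans (Equiv.swap 0 1)) 1 = 2 := by decide
      have e2 : ((Equiv.swap (1:Fin 3) 2).trans (Equiv.swap 0 1)) 2 = 0 := by decide
      rwa [e0, e1, e2] at h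
    · have h := key ((Equiv.swap 0 1).trans (Equiv.swap 1 2))
      have e0 : ((Equiv.swap (0:Fin 3) 1).trans (Equiv.swap 1 2)) 0 = 2 := by decide
      have e1 : ((Equiv.swap (0:Fin 3) 1).trans (Equiv.swap 1 2)) 1 = 0 := by decide
      have e2 : ((Equiv.swap (0:Fin 3) 1).trans (Equiv.swap 1 2)) 2 = 1 := by decide
      rwa [e0, e1, e2] at h
    · have h := key (Equiv.swap 0 2)
      have e0 : (Equiv.swap (0:Fin 3) 2) 0 = 2 := by decide
      have e1 : (Equiv.swap (0:Fin 3) 2) 1 = 1 := by decide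
      have e2 : (Equiv.swap (0:Fin 3) 2) 2 = 0 := by decide
      rwa [e0, e1, e2] at h
  · refine le_ciInf fun σ => ?_
    rw [sup23, fST2, fST3]
    rcases perm_cases σ with ⟨h0,h1,h2⟩|⟨h0,h1,h2⟩|⟨h0,h1,h2⟩|⟨h0,h1,h2⟩|⟨h0,h1,h2⟩|⟨h0,h1,h2⟩ <;>
      rw [h0, h1, h2] <;> omega

end Dist3

lemma minkey (c t1 t2 t3 t4 t5 t6 : ℤ) :
    min (min (min (min (min (c+t1) (c+t2)) (c+t4)) (c+t5)) (c+t6)) (c+t3) =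
    c + min t1 (min t2 (min t3 (min t4 (min t5 t6)))) := by omega

lemma minkey2 (n a b t1 t2 t3 t4 t5 t6 : ℤ) :
    (2*n + a + b + min t1 (min t2 (min t3 (min t4 (min t5 t6))))) - 2*n =
    a + b + min t1 (min t5 (min t3 (min t2 (min t4 t6)))) := by omega


/-- In `DL_3(q)`, let `(β_n)` be the sequence with
`m_3(β_n) = l_3(β_n) = n` (upward edges labeled `1`) and trivial coordinates in
trees `1` and `2`.  For any vertex `z` with coordinates `m_i, l_i, h_i = l_i - m_i`
and for `n` sufficiently large relative to these parameters,
`d(β_n, z) = 2n + m_1 + m_2 + min {m_1+h_3, m_2+h_3, l_1, h_2+h_3, h_1+h_3, l_2}`.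
In particular `d(β_n, id) = 2n`, and the horofunction `β` defined by `(β_n)`
satisfies `β(z) = m_1 + m_2 + min_{j=1,2} {m_j+h_3, h_j+h_3, l_j}`. -/
theorem beta_dist_formula {q : ℕ} (hq : 2 ≤ q) (z : DL 3 q) :
    (∃ N : ℕ, ∀ n ≥ N,
        (DL.dist (beta q hq n) z : ℤ) =
          2 * n + DL.mc z 0 + DL.mc z 1 +
            min ((DL.mc z 0 : ℤ) + DL.hc z 2)
              (min ((DL.mc z 1 : ℤ) + DL.hc z 2)
                (min (DL.lc z 0 : ℤ)
                  (min (DL.hc z 1 + DL.hc z 2)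
                    (min (DL.hc z 0 + DL.hc z 2) (DL.lc z 1 : ℤ))))) ∧
        DL.dist (beta q hq n) (DL.id0 3 q) = 2 * n) ∧
    Tendsto
      (fun n => (DL.dist (beta q hq n) z : ℤ) - (DL.dist (beta q hq n) (DL.id0 3 q) : ℤ))
      atTop (nhds (betaFn z)) := by
  have key : ∀ n, (z.t 0).m + (z.t 1).m + (z.t 2).m + (z.t 0).l + (z.t 1).l + (z.t 2).l + 1 ≤ n →
      (DL.dist (beta q hq n) z : ℤ) =
          2 * n + DL.mc z 0 + DL.mc z 1 +
            min ((DL.mc z 0 : ℤ) + DL.hc z 2)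
              (min ((DL.mc z 1 : ℤ) + DL.hc z 2)
                (min (DL.lc z 0 : ℤ)
                  (min (DL.hc z 1 + DL.hc z 2)
                    (min (DL.hc z 0 + DL.hc z 2) (DL.lc z 1 : ℤ))))) ∧
        DL.dist (beta q hq n) (DL.id0 3 q) = 2 * n := by
    intro n hn
    have hm3 : (z.t 2).m < n := by omega
    have ht0 : (beta q hq n).t 0 = TreeVertex.o q := rfl
    have ht1 : (beta q hq n).t 1 = TreeVertex.o q := rfl
    have ht2 : (beta q hq n).t 2 = ray q hq n := rfl
    have hM0 : DL.mm (beta q hq n) z 0 = (z.t 0).m := by rw [DL.mm, ht0, mPair_o_left]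
    have hM1 : DL.mm (beta q hq n) z 1 = (z.t 1).m := by rw [DL.mm, ht1, mPair_o_left]
    have hM2 : DL.mm (beta q hq n) z 2 = n := by
      rw [DL.mm, ht2, mPair_ray_left hq n _ hm3]
    have hL0 : DL.ll (beta q hq n) z 0 = (z.t 0).l := by rw [DL.ll, ht0, mPair_o_right]
    have hL1 : DL.ll (beta q hq n) z 1 = (z.t 1).l := by rw [DL.ll, ht1, mPair_o_right]
    have hL2 : DL.ll (beta q hq n) z 2 = (z.t 2).l + (n - (z.t 2).m) := by
      rw [DL.ll, ht2, mPair_ray_right hq n _ hm3]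
    have hid0 : ∀ i : Fin 3, (DL.id0 3 q).t i = TreeVertex.o q := fun _ => rfl
    have hM0' : DL.mm (beta q hq n) (DL.id0 3 q) 0 = 0 := by
      rw [DL.mm, ht0, hid0, mPair_o_left]; rfl
    have hM1' : DL.mm (beta q hq n) (DL.id0 3 q) 1 = 0 := by
      rw [DL.mm, ht1, hid0, mPair_o_left]; rfl
    have hM2' : DL.mm (beta q hq n) (DL.id0 3 q) 2 = n := by
      rw [DL.mm, ht2, hid0, mPair_o_right, ray_l]
    have hL0' : DL.ll (beta q hq n) (DL.id0 3 q) 0 = 0 := by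
      rw [DL.ll, ht0, hid0, mPair_o_left]; rfl
    have hL1' : DL.ll (beta q hq n) (DL.id0 3 q) 1 = 0 := by
      rw [DL.ll, ht1, hid0, mPair_o_left]; rfl
    have hL2' : DL.ll (beta q hq n) (DL.id0 3 q) 2 = n := by
      rw [DL.ll, ht2, hid0, mPair_o_left, ray_m]
    constructor
    · rw [DL.dist, dist3, hM0, hM1, hM2, hL0, hL1, hL2]
      have e1 : max ((z.t 0).m + (z.t 1).m + ((z.t 1).l + ((z.t 2).l + (n - (z.t 2).m)))) ((z.t 0).m + (z.t 1).m + n + (z.t 0).m + ((z.t 2).l + (n - (z.t 2).m))) = (z.t 0).m + (z.t 1).m + n + (z.t 0).m + ((z.t 2).l + (n - (z.t 2).m)) := by omega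
      have e2 : max ((z.t 1).m + (z.t 0).m + ((z.t 0).l + ((z.t 2).l + (n - (z.t 2).m)))) ((z.t 1).m + (z.t 0).m + n + (z.t 1).m + ((z.t 2).l + (n - (z.t 2).m))) = (z.t 1).m + (z.t 0).m + n + (z.t 1).m + ((z.t 2).l + (n - (z.t 2).m)) := by omega
      have e3 : max ((z.t 0).m + n + (((z.t 2).l + (n - (z.t 2).m)) + (z.t 1).l)) ((z.t 0).m + n + (z.t 1).m + (z.t 0).m + (z.t 1).l) = (z.t 0).m + n + (((z.t 2).l + (n - (z.t 2).m)) + (z.t 1).l) := by omega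
      have e4 : max ((z.t 1).m + n + (((z.t 2).l + (n - (z.t 2).m)) + (z.t 0).l)) ((z.t 1).m + n + (z.t 0).m + (z.t 1).m + (z.t 0).l) = (z.t 1).m + n + (((z.t 2).l + (n - (z.t 2).m)) + (z.t 0).l) := by omega
      have e5 : max (n + (z.t 0).m + ((z.t 0).l + (z.t 1).l)) (n + (z.t 0).m + (z.t 1).m + n + (z.t 1).l) = n + (z.t 0).m + (z.t 1).m + n + (z.t 1).l := by omega
      have e6 : max (n + (z.t 1).m + ((z.t 1).l + (z.t 0).l)) (n + (z.t 1).m + (z.t 0).m + n + (z.t 0).l) = n + (z.t 1).m + (z.t 0).m + n + (z.t 0).l := by omega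
      have g1 : ((((z.t 0).m + (z.t 1).m + n + (z.t 0).m + ((z.t 2).l + (n - (z.t 2).m)) : ℕ)) : ℤ) = 2 * (n:ℤ) + ((z.t 0).m : ℤ) + ((z.t 1).m : ℤ) + (((z.t 0).m:ℤ) + (((z.t 2).l : ℤ) - ((z.t 2).m : ℤ))) := by omega
      have g2 : ((((z.t 1).m + (z.t 0).m + n + (z.t 1).m + ((z.t 2).l + (n - (z.t 2).m)) : ℕ)) : ℤ) = 2 * (n:ℤ) + ((z.t 0).m : ℤ) + ((z.t 1).m : ℤ) + (((z.t 1).m:ℤ) + (((z.t 2).l : ℤ) - ((z.t 2).m : ℤ))) := by omega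
      have g3 : ((((z.t 0).m + n + (((z.t 2).l + (n - (z.t 2).m)) + (z.t 1).l) : ℕ)) : ℤ) = 2 * (n:ℤ) + ((z.t 0).m : ℤ) + ((z.t 1).m : ℤ) + ((((z.t 1).l:ℤ) - ((z.t 1).m:ℤ)) + (((z.t 2).l : ℤ) - ((z.t 2).m : ℤ))) := by omega
      have g4 : ((((z.t 1).m + n + (((z.t 2).l + (n - (z.t 2).m)) + (z.t 0).l) : ℕ)) : ℤ) = 2 * (n:ℤ) + ((z.t 0).m : ℤ) + ((z.t 1).m : ℤ) + ((((z.t 0).l:ℤ) - ((z.t 0).m:ℤ)) + (((z.t 2).l : ℤ) - ((z.t 2).m : ℤ))) := by omega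
      have g5 : (((n + (z.t 0).m + (z.t 1).m + n + (z.t 1).l : ℕ)) : ℤ) = 2 * (n:ℤ) + ((z.t 0).m : ℤ) + ((z.t 1).m : ℤ) + (((z.t 1).l:ℤ)) := by omega
      have g6 : (((n + (z.t 1).m + (z.t 0).m + n + (z.t 0).l : ℕ)) : ℤ) = 2 * (n:ℤ) + ((z.t 0).m : ℤ) + ((z.t 1).m : ℤ) + (((z.t 0).l:ℤ)) := by omega
      rw [e1, e2, e3, e4, e5, e6]
      simp only [DL.mc, DL.lc, DL.hc, TreeVertex.h, Nat.cast_min]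
      rw [g1, g2, g3, g4, g5, g6]
      exact minkey _ _ _ _ _ _ _
    · rw [DL.dist, dist3, hM0', hM1', hM2', hL0', hL1', hL2']
      omega
  refine ⟨⟨_, key⟩, ?_⟩
  refine Tendsto.congr' ?_ tendsto_const_nhds
  filter_upwards [eventually_ge_atTop
    ((z.t 0).m + (z.t 1).m + (z.t 2).m + (z.t 0).l + (z.t 1).l + (z.t 2).l + 1)] with n hn
  obtain ⟨h1, h2⟩ := key n hn
  rw [h1, h2]
  simp only [Nat.cast_mul, Nat.cast_ofNat, betaFn]
  exact (minkey2 _ _ _ _ _ _ _ _ _).symm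
end
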